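/- Let n ≥ 5 and let c be a map on the states of C_n with |Qc| = n-1. If Qc = Q \ {q} for some q ≠ 1, or if Qc = Q \ {1} but |Qc^2| ≤ n-2, then the extension C_n^c admits a synchronizing word of length strictly less than (n-1)^2. Consequently, if the shortest synchronizing word of C_n^c has length (n-1)^2, then Qc = Q \ {1} and c restricts to a permutation of Q \ {1}. -/
import Mathlib


/-- Apply a word (list of transition functions) to a state, left to right. -/
def applyWord {α : Type*} (w : List (α → α)) (q : α) : α :=
  w.foldl (fun s f => f s) q

/-- The Černý symbols on `Fin n` (state `i+1` is index `i`). -/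
def cernyA (n : ℕ) [NeZero n] : Fin n → Fin n := fun q => q + 1
def cernyB (n : ℕ) [NeZero n] : Fin n → Fin n := fun q => if q = 0 then 1 else q

/-- A word over the alphabet `{a, b, c}` of `C_n^c` which synchronizes. -/
def ShortSync (n : ℕ) [NeZero n] (c : Fin n → Fin n) (m : ℕ) : Prop :=
  ∃ w : List (Fin n → Fin n),
    (∀ f ∈ w, f = cernyA n ∨ f = cernyB n ∨ f = c) ∧
    (∃ qs : Fin n, ∀ q : Fin n, applyWord w q = qs) ∧
    w.length < m

lemma applyWord_append {α : Type*} (w1 w2 : List (α → α)) (q : α) :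
    applyWord (w1 ++ w2) q = applyWord w2 (applyWord w1 q) := by
  simp [applyWord]

lemma applyWord_cons {α : Type*} (f : α → α) (w : List (α → α)) (q : α) :
    applyWord (f :: w) q = applyWord w (f q) := rfl

lemma mod_small_cases (a n : ℕ) (h : a < 2 * n) :
    a % n = if a < n then a else a - n := by
  by_cases h2 : a < n
  · simp [h2, Nat.mod_eq_of_lt]
  · rw [if_neg h2, Nat.mod_eq_sub_mod (le_of_not_gt h2), Nat.mod_eq_of_lt (by omega)]

lemma applyA_val (n : ℕ) [NeZero n] (k : ℕ) (q : Fin n) :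
    (applyWord (List.replicate k (cernyA n)) q).val = (q.val + k) % n := by
  induction k generalizing q with
  | zero => simp [applyWord, Nat.mod_eq_of_lt q.isLt]
  | succ k ih =>
    rw [List.replicate_succ, applyWord_cons, ih]
    have h1 : (cernyA n q).val = (q.val + 1) % n := by
      show ((q + 1 : Fin n)).val = _
      rw [Fin.add_def]
      conv_rhs => rw [Nat.add_mod]
      rw [Nat.mod_eq_of_lt q.isLt]
      rfl
    rw [h1, Nat.mod_add_mod]
    congr 1
    omega

def cword (n : ℕ) [NeZero n] : ℕ → List (Fin n → Fin n)
  | 0 => []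
  | m + 1 => (List.replicate (n - 1) (cernyA n) ++ [cernyB n]) ++ cword n m

lemma cword_length (n : ℕ) [NeZero n] (m : ℕ) : (cword n m).length = m * n := by
  induction m with
  | zero => simp [cword]
  | succ m ih =>
    have h1 : 1 ≤ n := Nat.one_le_iff_ne_zero.mpr (NeZero.ne n)
    simp [cword, ih, Nat.succ_mul]
    omega

lemma cword_mem (n : ℕ) [NeZero n] (m : ℕ) (f : Fin n → Fin n) (h : f ∈ cword n m) :
    f = cernyA n ∨ f = cernyB n := by
  induction m with
  | zero => simp [cword] at h
  | succ m ih =>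
    simp only [cword, List.mem_append, List.mem_singleton, List.mem_replicate] at h
    rcases h with ((h | h) | h)
    · exact Or.inl h.2
    · exact Or.inr h
    · exact ih h

lemma cword_sync (n : ℕ) [NeZero n] (hn : 5 ≤ n) (m : ℕ) (q : Fin n)
    (h1 : 1 ≤ q.val) (h2 : q.val ≤ m + 1) :
    applyWord (cword n m) q = ⟨1, by omega⟩ := by
  induction m generalizing q with
  | zero =>
    have : q.val = 1 := by omega
    exact Fin.ext this
  | succ m ih =>
    rw [cword, applyWord_append, applyWord_append]
    set r := applyWord (List.replicate (n - 1) (cernyA n)) q with hr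
    have hrv : r.val = q.val - 1 := by
      rw [hr, applyA_val, mod_small_cases _ _ (by omega)]
      have : ¬ q.val + (n - 1) < n := by omega
      rw [if_neg this]
      omega
    by_cases h0 : r = 0
    · have hb : applyWord [cernyB n] r = (⟨1, by omega⟩ : Fin n) := by
        show cernyB n r = _
        rw [cernyB, if_pos h0]
        exact Fin.ext (show 1 % n = 1 from Nat.mod_eq_of_lt (by omega))
      rw [hb]
      exact ih ⟨1, by omega⟩ (le_refl 1) (Nat.le_add_left 1 m)
    · have hb : applyWord [cernyB n] r = r := by
        show cernyB n r = _
        rw [cernyB, if_neg h0]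
      rw [hb]
      have hr0 : r.val ≠ 0 := fun hh => h0 (Fin.ext (by rw [hh]; rfl))
      exact ih r (by omega) (by omega)

lemma bU_sync (n : ℕ) [NeZero n] (hn : 5 ≤ n) (m : ℕ) (s : Fin n) (h : s.val ≤ m + 1) :
    applyWord (cernyB n :: cword n m) s = ⟨1, by omega⟩ := by
  rw [applyWord_cons]
  by_cases h0 : s = 0
  · have hb : cernyB n s = (⟨1, by omega⟩ : Fin n) := by
      rw [cernyB, if_pos h0]; exact Fin.ext (show 1 % n = 1 from Nat.mod_eq_of_lt (by omega))
    rw [hb]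
    exact cword_sync n hn m _ (le_refl 1) (Nat.le_add_left 1 m)
  · have hb : cernyB n s = s := by rw [cernyB, if_neg h0]
    rw [hb]
    have hs0 : s.val ≠ 0 := fun hh => h0 (Fin.ext (by rw [hh]; rfl))
    exact cword_sync n hn m s (by omega) h

lemma tail_sync (n : ℕ) [NeZero n] (hn : 5 ≤ n) (t m : ℕ) (s : Fin n)
    (h : (s.val + t) % n ≤ m + 1) :
    applyWord (List.replicate t (cernyA n) ++ cernyB n :: cword n m) s = ⟨1, by omega⟩ := by
  rw [applyWord_append]
  apply bU_sync n hn m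
  rw [applyA_val]
  exact h

/-- let n ≥ 5 and `|Qc| = n-1`.  If `Qc = Q \ {q}` for some `q ≠ 1`, or
`Qc = Q \ {1}` and `|Qc²| ≤ n-2`, then `C_n^c` synchronizes in fewer than `(n-1)²` steps.
Consequently, if every synchronizing word of `C_n^c` has length at least `(n-1)²`,
then `Qc = Q \ {1}` and `c` restricts to a permutation of `Q \ {1}`.
(State 1 is index 0.) -/
theorem deficiency_one_structure (n : ℕ) (hn : 5 ≤ n) [NeZero n]
    (c : Fin n → Fin n) (hdef : (Finset.univ.image c).card = n - 1) :
    (((∃ q : Fin n, q ≠ 0 ∧ Finset.univ.image c = Finset.univ \ {q}) ∨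
      (Finset.univ.image c = Finset.univ \ {0} ∧
        (Finset.univ.image (c ∘ c)).card ≤ n - 2)) →
      ShortSync n c ((n - 1) ^ 2)) ∧
    ((∀ w : List (Fin n → Fin n),
        (∀ f ∈ w, f = cernyA n ∨ f = cernyB n ∨ f = c) →
        (∃ qs : Fin n, ∀ q : Fin n, applyWord w q = qs) →
        (n - 1) ^ 2 ≤ w.length) →
      Finset.univ.image c = Finset.univ \ {0} ∧
      (Finset.univ \ {0} : Finset (Fin n)).image c = Finset.univ \ {0}) := by
  have key3 : (n - 3) * n + n + 1 = (n - 1) ^ 2 := by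
    obtain ⟨m, rfl⟩ : ∃ m, n = m + 5 := ⟨n - 5, by omega⟩
    show (m + 2) * (m + 5) + (m + 5) + 1 = (m + 4) ^ 2
    ring
  have key4 : (n - 4) * n + 2 * n + 1 = (n - 1) ^ 2 := by
    obtain ⟨m, rfl⟩ : ∃ m, n = m + 5 := ⟨n - 5, by omega⟩
    show (m + 1) * (m + 5) + 2 * (m + 5) + 1 = (m + 4) ^ 2
    ring
  have memtail : ∀ (t m : ℕ) (f : Fin n → Fin n),
      f ∈ List.replicate t (cernyA n) ++ cernyB n :: cword n m →
      f = cernyA n ∨ f = cernyB n ∨ f = c := by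
    intro t m f hf
    rcases List.mem_append.mp hf with hf | hf
    · exact Or.inl (List.mem_replicate.mp hf).2
    · rcases List.mem_cons.mp hf with hf | hf
      · exact Or.inr (Or.inl hf)
      · rcases cword_mem n m f hf with h | h
        · exact Or.inl h
        · exact Or.inr (Or.inl h)
  have part1 : ((∃ q : Fin n, q ≠ 0 ∧ Finset.univ.image c = Finset.univ \ {q}) ∨
      (Finset.univ.image c = Finset.univ \ {0} ∧
        (Finset.univ.image (c ∘ c)).card ≤ n - 2)) →
      ShortSync n c ((n - 1) ^ 2) := by
    rintro (⟨q0, hq0, himg⟩ | ⟨himg, hcc⟩)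
    · -- Case A : hole q0 ≠ 0
      have hq0v : 1 ≤ q0.val := by
        rcases Nat.eq_zero_or_pos q0.val with h | h
        · exact absurd (Fin.ext (by rw [h]; rfl) : q0 = 0) hq0
        · exact h
      refine ⟨c :: (List.replicate (n - 1 - q0.val) (cernyA n) ++
          cernyB n :: cword n (n - 3)), ?_, ⟨⟨1, by omega⟩, ?_⟩, ?_⟩
      · intro f hf
        rcases List.mem_cons.mp hf with hf | hf
        · exact Or.inr (Or.inr hf)
        · exact memtail _ _ f hf
      · intro q
        rw [applyWord_cons]
        set s := c q with hs
        have hsmem : s ∈ Finset.univ \ {q0} := by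
          rw [← himg]; exact Finset.mem_image_of_mem c (Finset.mem_univ q)
        have hsne : s ≠ q0 := by
          have := (Finset.mem_sdiff.mp hsmem).2
          simpa using this
        have hsv : s.val ≠ q0.val := fun h => hsne (Fin.ext h)
        apply tail_sync n hn _ _ s
        rw [mod_small_cases _ _ (by have := s.isLt; omega)]
        have h1 := s.isLt
        have h2 := q0.isLt
        split_ifs with h3 <;> omega
      · simp only [List.length_cons, List.length_append, List.length_replicate,
          cword_length]
        have h2 := q0.isLt
        omega
    · -- Case B
      have hc0 : ∀ p : Fin n, c p ≠ 0 := by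
        intro p
        have hm : c p ∈ Finset.univ \ {(0 : Fin n)} := by
          rw [← himg]; exact Finset.mem_image_of_mem c (Finset.mem_univ p)
        have := (Finset.mem_sdiff.mp hm).2
        simpa using this
      by_cases hex : ∃ j : Fin n, 2 ≤ j.val ∧ j ∉ Finset.univ.image (c ∘ c)
      · -- B1 : hole j of c∘c with j.val ≥ 2
        obtain ⟨j, hj2, hjS⟩ := hex
        refine ⟨c :: c :: (List.replicate (n - 1 - j.val) (cernyA n) ++
            cernyB n :: cword n (n - 3)), ?_, ⟨⟨1, by omega⟩, ?_⟩, ?_⟩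
        · intro f hf
          rcases List.mem_cons.mp hf with hf | hf
          · exact Or.inr (Or.inr hf)
          · rcases List.mem_cons.mp hf with hf | hf
            · exact Or.inr (Or.inr hf)
            · exact memtail _ _ f hf
        · intro q
          rw [applyWord_cons, applyWord_cons]
          set s := c (c q) with hs
          have hsne : s ≠ j := by
            intro h
            exact hjS (h ▸ (Finset.mem_image_of_mem (c ∘ c) (Finset.mem_univ q)))
          have hsv : s.val ≠ j.val := fun h => hsne (Fin.ext h)
          apply tail_sync n hn _ _ s
          rw [mod_small_cases _ _ (by have := s.isLt; omega)]
          have h1 := s.isLt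
          have h2 := j.isLt
          split_ifs with h3 <;> omega
        · simp only [List.length_cons, List.length_append, List.length_replicate,
            cword_length]
          have h2 := j.isLt
          omega
      · -- B2 : c∘c misses 1 (and 0)
        push_neg at hex
        have h1S : (⟨1, by omega⟩ : Fin n) ∉ Finset.univ.image (c ∘ c) := by
          intro h1
          have hsub : Finset.univ \ {(0 : Fin n)} ⊆ Finset.univ.image (c ∘ c) := by
            intro x hx
            have hx0 : x ≠ 0 := by
              have := (Finset.mem_sdiff.mp hx).2
              simpa using this
            have hxv : x.val ≠ 0 := fun h => hx0 (Fin.ext (by rw [h]; rfl))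
            rcases Nat.lt_or_ge x.val 2 with h | h
            · have hx1 : x = (⟨1, by omega⟩ : Fin n) := Fin.ext (show x.val = 1 by omega)
              rw [hx1]; exact h1
            · exact hex x h
          have hcard := Finset.card_le_card hsub
          rw [Finset.card_sdiff_of_subset (Finset.subset_univ _), Finset.card_univ,
            Fintype.card_fin, Finset.card_singleton] at hcard
          omega
        refine ⟨c :: c :: (List.replicate (n - 2) (cernyA n) ++
            cernyB n :: cword n (n - 4)), ?_, ⟨⟨1, by omega⟩, ?_⟩, ?_⟩
        · intro f hf
          rcases List.mem_cons.mp hf with hf | hf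
          · exact Or.inr (Or.inr hf)
          · rcases List.mem_cons.mp hf with hf | hf
            · exact Or.inr (Or.inr hf)
            · exact memtail _ _ f hf
        · intro q
          rw [applyWord_cons, applyWord_cons]
          set s := c (c q) with hs
          have hs0 : s.val ≠ 0 := fun h => (hc0 (c q)) (Fin.ext (by rw [← hs, h]; rfl))
          have hs1 : s.val ≠ 1 := by
            intro h
            exact h1S ((Fin.ext (show s.val = 1 from h) : s = ⟨1, by omega⟩) ▸
              Finset.mem_image_of_mem (c ∘ c) (Finset.mem_univ q))
          apply tail_sync n hn _ _ s
          rw [mod_small_cases _ _ (by have := s.isLt; omega)]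
          have h1 := s.isLt
          split_ifs with h3 <;> omega
        · simp only [List.length_cons, List.length_append, List.length_replicate,
            cword_length]
          omega
  refine ⟨part1, ?_⟩
  intro H
  have notShort : ¬ ShortSync n c ((n - 1) ^ 2) := by
    rintro ⟨w, hw1, hw2, hw3⟩
    exact absurd (H w hw1 hw2) (by omega)
  have notDisj : ¬ ((∃ q : Fin n, q ≠ 0 ∧ Finset.univ.image c = Finset.univ \ {q}) ∨
      (Finset.univ.image c = Finset.univ \ {0} ∧
        (Finset.univ.image (c ∘ c)).card ≤ n - 2)) := fun hd => notShort (part1 hd)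
  have hcard1 : (Finset.univ \ Finset.univ.image c).card = 1 := by
    rw [Finset.card_sdiff_of_subset (Finset.subset_univ _), Finset.card_univ, Fintype.card_fin,
      hdef]
    omega
  obtain ⟨q, hq⟩ := Finset.card_eq_one.mp hcard1
  have himg : Finset.univ.image c = Finset.univ \ {q} := by
    rw [← hq, Finset.sdiff_sdiff_self_left, Finset.univ_inter]
  have hq0 : q = 0 := by
    by_contra hne
    exact notDisj (Or.inl ⟨q, hne, himg⟩)
  subst hq0
  have hccard : n - 1 ≤ (Finset.univ.image (c ∘ c)).card := by
    by_contra h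
    push_neg at h
    exact notDisj (Or.inr ⟨himg, by omega⟩)
  refine ⟨himg, ?_⟩
  have him2 : (Finset.univ \ {(0 : Fin n)}).image c = Finset.univ.image (c ∘ c) := by
    rw [← himg, Finset.image_image]
  have hsub : (Finset.univ \ {(0 : Fin n)}).image c ⊆ Finset.univ \ {0} := by
    rw [← himg]
    exact Finset.image_subset_image (Finset.subset_univ _)
  apply Finset.eq_of_subset_of_card_le hsub
  rw [him2, Finset.card_sdiff_of_subset (Finset.subset_univ _), Finset.card_univ,
    Fintype.card_fin, Finset.card_singleton]
  omega
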